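/- The set of root marginals of finite tree 2-SAT formulas is exactly the set of rational numbers strictly between 0 and 1: A_T = ℚ ∩ (0,1). -/

import Mathlib

/-!
A tree formula has solutions with either value at the root `o`: orient the factor graph towards
`o` and give every other variable its sign in its parent clause, so that each clause is satisfied
by a child variable. Hence the root marginal is `T / (T + F)` with positive solution counts
`T, F`. Conversely, for a path formula `(σ₀ = s₀ ∨ σ₁ = t₀) ∧ (σ₁ = s₁ ∨ σ₂ = t₁) ∧ ⋯` rooted at
`σ₀`, prepending the clause `(true, false)` or `(false, true)` turns the counts `(T, F)` into
`(T + F, F)` or `(T, T + F)`. Running the subtractive Euclidean algorithm backwards from `(1, 1)`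
therefore realises every coprime pair `(p, q - p)`, i.e. every marginal `p / q ∈ (0, 1)`.
-/

/-- A 2-SAT clause over variables `V`: two distinct variables `x ≠ y` together with
signs `sx, sy : Bool` (`true` encodes `+1`, `false` encodes `-1`). -/
structure Clause2 (V : Type) where
  x : V
  y : V
  sx : Bool
  sy : Bool
  hxy : x ≠ y

variable {V : Type} [Fintype V] [DecidableEq V]

/-- Variable `v` occurs in clause `a`. -/
def occurs (v : V) (a : Clause2 V) : Prop := v = a.x ∨ v = a.y

instance (v : V) (a : Clause2 V) : Decidable (occurs v a) := by
  unfold occurs; infer_instance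

/-- An assignment `σ : V → Bool` satisfies clause `a` if one of its two literals is satisfied. -/
def satClause (σ : V → Bool) (a : Clause2 V) : Prop := σ a.x = a.sx ∨ σ a.y = a.sy

instance (σ : V → Bool) (a : Clause2 V) : Decidable (satClause σ a) := by
  unfold satClause; infer_instance

/-- The set `S(Φ)` of satisfying assignments of the formula `Φ`. -/
def sols (Φ : Finset (Clause2 V)) : Finset (V → Bool) :=
  Finset.univ.filter fun σ => ∀ a ∈ Φ, satClause σ a

/-- The marginal `μ_Φ(σ_v = b)`: the fraction of satisfying assignments with `σ v = b`. -/
noncomputable def marginal (Φ : Finset (Clause2 V)) (v : V) (b : Bool) : ℝ :=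
  (((sols Φ).filter fun σ => σ v = b).card : ℝ) / ((sols Φ).card : ℝ)

/-- The factor graph `G(Φ)`: the bipartite graph on variables and clauses with an edge
`{v, a}` whenever `v` occurs in `a`. -/
def factorGraph (Φ : Finset (Clause2 V)) : SimpleGraph (V ⊕ {a // a ∈ Φ}) :=
  SimpleGraph.fromRel fun u w =>
    match u, w with
    | Sum.inl v, Sum.inr a => occurs v a.val
    | _, _ => False

/-- `A_T`: the set of all root marginals `μ_T(σ_o = 1)` of finite rooted tree formulas. -/
noncomputable def treeMarginals : Set ℝ :=
  {r | ∃ (n : ℕ) (Φ : Finset (Clause2 (Fin n))) (o : Fin n),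
        (factorGraph Φ).IsTree ∧ marginal Φ o true = r}

namespace SimpleGraph

variable {W : Type*} {G : SimpleGraph W}

open Classical in
/-- The vertex before `v` on some path from `r` to `v`: in a tree rooted at `r`, the parent of `v`
(and `r` itself for `v = r`). -/
noncomputable def Preconnected.parent (hG : G.Preconnected) (r v : W) : W :=
  ((hG r v).some.toPath : G.Walk r v).penultimate

theorem Preconnected.parent_self (hG : G.Preconnected) (r : W) : hG.parent r r = r := by
  classical
  rw [parent, (Walk.isPath_iff_nil.1 (hG r r).some.toPath.isPath).eq_nil, Walk.penultimate_nil]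

theorem IsAcyclic.parent_eq_or_parent_eq (hG : G.IsAcyclic) (hc : G.Preconnected) (r : W)
    {u w : W} (hadj : G.Adj u w) : hc.parent r u = w ∨ hc.parent r w = u := by
  classical
  have hp := (hc r u).some.toPath.isPath
  have hq := (hc r w).some.toPath.isPath
  by_cases hu : u ∈ ((hc r w).some.toPath : G.Walk r w).support
  · exact .inr (hG.eq_penultimate_of_adj_end hq hadj.symm hu).symm
  · exact .inl (hG.eq_penultimate_of_adj_end hp hadj
      (hG.mem_support_of_ne_mem_support_of_adj_of_isPath hp hq hadj hu)).symm

theorem isAcyclic_hasse_nat : (hasse ℕ).IsAcyclic := by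
  have crosses : ∀ (v : ℕ) {a b : ℕ} (p : (hasse ℕ).Walk a b), a ≤ v → v + 1 ≤ b →
      s(v, v + 1) ∈ p.edges := by
    intro v a b p
    induction p with
    | nil => omega
    | @cons a c b hac q ih =>
      intro ha hb
      rw [Walk.edges_cons, List.mem_cons]
      by_cases hc : c ≤ v
      · exact .inr (ih hc hb)
      · rw [hasse_adj, Nat.covBy_iff_add_one_eq, Nat.covBy_iff_add_one_eq] at hac
        left
        obtain rfl : a = v := by omega
        obtain rfl : c = a + 1 := by omega
        rfl
  rw [isAcyclic_iff_forall_adj_isBridge]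
  intro v w hvw
  rcases hasse_adj.1 hvw with h | h <;> rw [Nat.covBy_iff_add_one_eq] at h <;> subst h
  · exact isBridge_iff_forall_walk_mem_edges.2 fun p => crosses v p le_rfl le_rfl
  · rw [Sym2.eq_swap]
    exact isBridge_iff_forall_walk_mem_edges.2 fun p => crosses w p le_rfl le_rfl

end SimpleGraph

omit [Fintype V] [DecidableEq V] in
theorem factorGraph_adj_inl_inr {Φ : Finset (Clause2 V)} {v : V} {a : {a // a ∈ Φ}} :
    (factorGraph Φ).Adj (Sum.inl v) (Sum.inr a) ↔ occurs v a.1 := by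
  simp [factorGraph]

omit [Fintype V] [DecidableEq V] in
theorem factorGraph_not_adj_inl_inl {Φ : Finset (Clause2 V)} (v w : V) :
    ¬(factorGraph Φ).Adj (Sum.inl v) (Sum.inl w) := by
  simp [factorGraph]

omit [Fintype V] [DecidableEq V] in
theorem factorGraph_not_adj_inr_inr {Φ : Finset (Clause2 V)} (a b : {a // a ∈ Φ}) :
    ¬(factorGraph Φ).Adj (Sum.inr a) (Sum.inr b) := by
  simp [factorGraph]

theorem mem_sols {Φ : Finset (Clause2 V)} {σ : V → Bool} :
    σ ∈ sols Φ ↔ ∀ a ∈ Φ, satClause σ a := by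
  simp [sols]

/-- `sign(v, a)`, meaningful when `v` occurs in `a`. -/
def Clause2.sign (a : Clause2 V) (v : V) : Bool := if v = a.x then a.sx else a.sy

open SimpleGraph in
theorem exists_mem_sols_apply_eq {Φ : Finset (Clause2 V)} (hT : (factorGraph Φ).IsTree)
    (o : V) (b : Bool) : ∃ σ ∈ sols Φ, σ o = b := by
  set parent := hT.connected.preconnected.parent (Sum.inl o)
  let σ : V → Bool := fun v => (parent (Sum.inl v)).elim (fun _ => b) fun a => a.1.sign v
  refine ⟨σ, mem_sols.2 fun a ha => ?_, by simp [σ, parent, Preconnected.parent_self]⟩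
  have toward : ∀ v, occurs v a →
      parent (Sum.inl v) = Sum.inr ⟨a, ha⟩ ∨ parent (Sum.inr ⟨a, ha⟩) = Sum.inl v :=
    fun v hv => hT.isAcyclic.parent_eq_or_parent_eq _ _ (factorGraph_adj_inl_inr.2 hv)
  rcases toward a.x (.inl rfl) with hx | hx
  · exact .inl (by simp [σ, hx, Clause2.sign])
  rcases toward a.y (.inr rfl) with hy | hy
  · exact .inr (by simp [σ, hy, Clause2.sign, a.hxy.symm])
  · exact absurd (hx.symm.trans hy) (by simpa using a.hxy)

def solsWith (Φ : Finset (Clause2 V)) (v : V) (b : Bool) : Finset (V → Bool) :=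
  (sols Φ).filter fun σ => σ v = b

theorem card_sols_eq_add (Φ : Finset (Clause2 V)) (v : V) :
    (sols Φ).card = (solsWith Φ v true).card + (solsWith Φ v false).card := by
  rw [solsWith, solsWith, ← Finset.card_filter_add_card_filter_not (fun σ => σ v = true)]
  simp

theorem marginal_true_eq (Φ : Finset (Clause2 V)) (v : V) :
    marginal Φ v true =
      (solsWith Φ v true).card / ((solsWith Φ v true).card + (solsWith Φ v false).card) := by
  rw [marginal, card_sols_eq_add Φ v]
  push_cast
  rfl

theorem card_solsWith_pos {Φ : Finset (Clause2 V)} (hT : (factorGraph Φ).IsTree) (o : V)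
    (b : Bool) : 0 < (solsWith Φ o b).card := by
  obtain ⟨σ, hσ, hσo⟩ := exists_mem_sols_apply_eq hT o b
  exact Finset.card_pos.2 ⟨σ, Finset.mem_filter.2 ⟨hσ, hσo⟩⟩

def chainClause (L : List (Bool × Bool)) (i : Fin L.length) : Clause2 (Fin (L.length + 1)) :=
  ⟨i.castSucc, i.succ, L[i].1, L[i].2, Fin.castSucc_lt_succ.ne⟩

theorem chainClause_injective (L : List (Bool × Bool)) : (chainClause L).Injective :=
  fun _ _ h => Fin.castSucc_injective _ (congrArg Clause2.x h)

/-- The path formula `(σ₀ = s₀ ∨ σ₁ = t₀) ∧ (σ₁ = s₁ ∨ σ₂ = t₁) ∧ ⋯`, where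
`L = [(s₀, t₀), (s₁, t₁), …]`. -/
def chainFormula (L : List (Bool × Bool)) : Finset (Clause2 (Fin (L.length + 1))) :=
  Finset.univ.map ⟨chainClause L, chainClause_injective L⟩

theorem mem_chainFormula {L : List (Bool × Bool)} {a : Clause2 (Fin (L.length + 1))} :
    a ∈ chainFormula L ↔ ∃ i, chainClause L i = a := by
  simp [chainFormula]

theorem mem_sols_chainFormula {L : List (Bool × Bool)} {σ : Fin (L.length + 1) → Bool} :
    σ ∈ sols (chainFormula L) ↔
      ∀ i : Fin L.length, σ i.castSucc = L[i].1 ∨ σ i.succ = L[i].2 := by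
  simp [mem_sols, chainFormula, satClause, chainClause]

theorem mem_sols_chainFormula_cons {s t : Bool} {L : List (Bool × Bool)}
    {σ : Fin (L.length + 2) → Bool} :
    σ ∈ sols (chainFormula ((s, t) :: L)) ↔
      (σ 0 = s ∨ Fin.tail σ 0 = t) ∧ Fin.tail σ ∈ sols (chainFormula L) := by
  rw [mem_sols_chainFormula, mem_sols_chainFormula]
  refine Fin.forall_fin_succ.trans ?_
  simp [Fin.tail]

theorem card_solsWith_chainFormula_nil (b : Bool) :
    (solsWith (chainFormula []) 0 b).card = 1 := by
  rw [Finset.card_eq_one]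
  refine ⟨fun _ => b, Finset.ext fun σ => ?_⟩
  simp [solsWith, mem_sols_chainFormula, funext_iff, Fin.forall_fin_one]

theorem card_solsWith_chainFormula_cons (s t b : Bool) (L : List (Bool × Bool)) :
    (solsWith (chainFormula ((s, t) :: L)) 0 b).card =
      ((sols (chainFormula L)).filter fun τ => b = s ∨ τ 0 = t).card := by
  refine Finset.card_nbij' Fin.tail (fun τ => Fin.cons b τ) ?_ ?_ ?_ ?_
  · intro σ hσ
    simp only [solsWith, Finset.coe_filter, Set.mem_ofPred_eq, mem_sols_chainFormula_cons]
      at hσ ⊢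
    obtain ⟨⟨hs, hsol⟩, rfl⟩ := hσ
    exact ⟨hsol, hs⟩
  · intro τ hτ
    simp only [solsWith, Finset.coe_filter, Set.mem_ofPred_eq, mem_sols_chainFormula_cons]
      at hτ ⊢
    simpa [Fin.tail] using hτ.symm
  · intro σ hσ
    simp only [solsWith, Finset.coe_filter, Set.mem_ofPred_eq] at hσ
    rw [← hσ.2]
    exact Fin.cons_self_tail σ
  · intro τ _
    exact Fin.tail_cons _ _

theorem exists_chainFormula_card_solsWith (a b : ℕ) (ha : 0 < a) (hb : 0 < b)
    (hab : a.Coprime b) : ∃ L : List (Bool × Bool),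
      (solsWith (chainFormula L) 0 true).card = a ∧
        (solsWith (chainFormula L) 0 false).card = b := by
  rcases lt_trichotomy a b with hlt | rfl | hgt
  · obtain ⟨L, hT, hF⟩ := exists_chainFormula_card_solsWith a (b - a) ha (by omega)
      ((Nat.coprime_sub_self_right hlt.le).2 hab)
    refine ⟨(false, true) :: L, ?_, ?_⟩
    · rw [card_solsWith_chainFormula_cons]
      simpa [solsWith] using hT
    · simp only [List.length_cons, card_solsWith_chainFormula_cons, true_or,
        Finset.filter_true, card_sols_eq_add (chainFormula L) 0, hT, hF]
      omega
  · obtain rfl : a = 1 := (Nat.coprime_self a).1 hab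
    exact ⟨[], card_solsWith_chainFormula_nil _, card_solsWith_chainFormula_nil _⟩
  · obtain ⟨L, hT, hF⟩ := exists_chainFormula_card_solsWith (a - b) b (by omega) hb
      ((Nat.coprime_sub_self_left hgt.le).2 hab)
    refine ⟨(true, false) :: L, ?_, ?_⟩
    · simp only [List.length_cons, card_solsWith_chainFormula_cons, true_or,
        Finset.filter_true, card_sols_eq_add (chainFormula L) 0, hT, hF]
      omega
    · rw [card_solsWith_chainFormula_cons]
      simpa [solsWith] using hF
termination_by a + b

theorem eq_of_mem_chainFormula_of_x_eq {L : List (Bool × Bool)}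
    {a b : Clause2 (Fin (L.length + 1))} (ha : a ∈ chainFormula L) (hb : b ∈ chainFormula L)
    (h : a.x = b.x) : a = b := by
  obtain ⟨i, rfl⟩ := mem_chainFormula.1 ha
  obtain ⟨j, rfl⟩ := mem_chainFormula.1 hb
  rw [Fin.castSucc_injective _ h]

open SimpleGraph in
/-- Laying the vertices out as `x₀, c₀, x₁, c₁, …` embeds the factor graph into `hasse ℕ`. -/
theorem isAcyclic_factorGraph_chainFormula (L : List (Bool × Bool)) :
    (factorGraph (chainFormula L)).IsAcyclic := by
  let height : Fin (L.length + 1) ⊕ {a // a ∈ chainFormula L} → ℕ :=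
    Sum.elim (fun v => 2 * v) fun a => 2 * a.1.x + 1
  have adj_height : ∀ v a, occurs v a.1 → (hasse ℕ).Adj (height (.inl v)) (height (.inr a)) := by
    rintro v ⟨a, ha⟩ hv
    obtain ⟨i, rfl⟩ := mem_chainFormula.1 ha
    rcases hv with rfl | rfl <;> simp [height, hasse_adj, chainClause, mul_add]
  let f : factorGraph (chainFormula L) →g hasse ℕ := ⟨height, by
    rintro (v | a) (w | b) h
    · exact absurd h (factorGraph_not_adj_inl_inl v w)
    · exact adj_height v b (factorGraph_adj_inl_inr.1 h)
    · exact (adj_height w a (factorGraph_adj_inl_inr.1 h.symm)).symm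
    · exact absurd h (factorGraph_not_adj_inr_inr a b)⟩
  refine isAcyclic_hasse_nat.comap f ?_
  rintro (v | a) (w | b) h <;> simp only [f, height, RelHom.coeFn_mk, Sum.elim_inl,
    Sum.elim_inr] at h
  · exact congrArg Sum.inl (Fin.ext (by omega))
  · omega
  · omega
  · exact congrArg Sum.inr
      (Subtype.ext (eq_of_mem_chainFormula_of_x_eq a.2 b.2 (Fin.ext (by omega))))

open SimpleGraph in
theorem connected_factorGraph_chainFormula (L : List (Bool × Bool)) :
    (factorGraph (chainFormula L)).Connected := by
  have reach_var : ∀ v, (factorGraph (chainFormula L)).Reachable (.inl 0) (.inl v) := by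
    intro v
    induction v using Fin.induction with
    | zero => rfl
    | succ i ih =>
      let c : {a // a ∈ chainFormula L} := ⟨_, mem_chainFormula.2 ⟨i, rfl⟩⟩
      have h₁ : (factorGraph _).Adj (.inl i.castSucc) (.inr c) :=
        factorGraph_adj_inl_inr.2 (.inl rfl)
      have h₂ : (factorGraph _).Adj (.inl i.succ) (.inr c) :=
        factorGraph_adj_inl_inr.2 (.inr rfl)
      exact ih.trans (h₁.reachable.trans h₂.reachable.symm)
  have reach : ∀ u, (factorGraph (chainFormula L)).Reachable (.inl 0) u := by
    rintro (v | ⟨a, ha⟩)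
    · exact reach_var v
    · obtain ⟨i, rfl⟩ := mem_chainFormula.1 ha
      exact (reach_var _).trans (factorGraph_adj_inl_inr.2 (.inl rfl)).reachable
  exact (connected_iff _).2 ⟨fun u w => (reach u).symm.trans (reach w), ⟨.inl 0⟩⟩

theorem isTree_factorGraph_chainFormula (L : List (Bool × Bool)) :
    (factorGraph (chainFormula L)).IsTree :=
  ⟨connected_factorGraph_chainFormula L, isAcyclic_factorGraph_chainFormula L⟩

theorem Rat.exists_coprime_eq_div_add {q : ℚ} (h0 : 0 < q) (h1 : q < 1) :
    ∃ a b : ℕ, 0 < a ∧ 0 < b ∧ a.Coprime b ∧ q = a / (a + b) := by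
  have hnum : 0 < q.num := Rat.num_pos.2 h0
  have hlt : q.num < q.den := Rat.num_lt_denom_iff.2 h1
  have hcast : ((q.num.natAbs : ℤ) : ℚ) = q.num := by rw [Int.natAbs_of_nonneg hnum.le]
  refine ⟨q.num.natAbs, q.den - q.num.natAbs, by omega, by omega,
    (Nat.coprime_sub_self_right (by omega)).2 q.reduced, ?_⟩
  rw [Nat.cast_sub (by omega), add_sub_cancel, ← Int.cast_natCast, hcast, Rat.num_div_den]

theorem natCast_div_add_mem_rat_Ioo {a b : ℕ} (ha : 0 < a) (hb : 0 < b) :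
    (a / (a + b) : ℝ) ∈ {x : ℝ | ∃ q : ℚ, x = q} ∩ Set.Ioo 0 1 :=
  ⟨⟨a / (a + b), by push_cast; rfl⟩, by positivity,
    (div_lt_one (by positivity)).2 (by simpa using hb)⟩

/-- **The set of root marginals of finite tree 2-SAT formulas is exactly `ℚ ∩ (0,1)`.** -/
theorem treeMarginals_eq_rat_Ioo :
    treeMarginals = {x : ℝ | ∃ q : ℚ, x = (q : ℝ)} ∩ Set.Ioo (0 : ℝ) 1 := by
  ext x
  constructor
  · rintro ⟨n, Φ, o, hT, rfl⟩
    rw [marginal_true_eq]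
    exact natCast_div_add_mem_rat_Ioo (card_solsWith_pos hT o true) (card_solsWith_pos hT o false)
  · rintro ⟨⟨q, rfl⟩, h0, h1⟩
    obtain ⟨a, b, ha, hb, hab, rfl⟩ :=
      Rat.exists_coprime_eq_div_add (q := q) (by exact_mod_cast h0) (by exact_mod_cast h1)
    obtain ⟨L, hT, hF⟩ := exists_chainFormula_card_solsWith a b ha hb hab
    refine ⟨_, chainFormula L, 0, isTree_factorGraph_chainFormula L, ?_⟩
    rw [marginal_true_eq, hT, hF]
    push_cast
    rfl
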